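/- Let X be a compact Hausdorff space and ν ∈ O(X). Then the fiber (μ_O X)⁻¹(ν) = {Λ ∈ O(O(X)) : Λ(π_φ) = ν(φ) for all φ ∈ C(X)} is nonempty and has a greatest element and a least element with respect to the pointwise order on functionals (Λ₁ ≤ Λ₂ iff Λ₁(Φ) ≤ Λ₂(Φ) for all Φ ∈ C(O(X))); namely, the pointwise supremum and the pointwise infimum of the fiber belong to the fiber. -/

import Mathlib

/-- The set of normed, weakly additive, order-preserving functionals on `C(X, ℝ)`. -/
def OF (X : Type*) [TopologicalSpace X] : Set (C(X, ℝ) → ℝ) :=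
  {ν | ν 1 = 1 ∧ (∀ (φ : C(X, ℝ)) (c : ℝ), ν (φ + ContinuousMap.const X c) = ν φ + c) ∧
    ∀ φ ψ : C(X, ℝ), φ ≤ ψ → ν φ ≤ ν ψ}

/-- For `φ ∈ C(X, ℝ)`, the evaluation map `π_φ : O(X) → ℝ`. -/
def piO (X : Type*) [TopologicalSpace X] (φ : C(X, ℝ)) : C(↥(OF X), ℝ) :=
  ⟨fun ν => ν.1 φ, (continuous_apply φ).comp continuous_subtype_val⟩

/-- The monad multiplication `μ_O X : O(O(X)) → O(X)`, `μ_O X (M) (φ) = M (π_φ)`. -/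
def muO (X : Type*) [TopologicalSpace X] (M : ↥(OF (↥(OF X)))) : ↥(OF X) := by
  refine ⟨fun φ => M.1 (piO X φ), ?_, ?_, ?_⟩
  · have h1 : piO X (1 : C(X, ℝ)) = 1 := by
      ext ν; exact ν.2.1
    show M.1 (piO X 1) = 1
    rw [h1]; exact M.2.1
  · intro φ c
    have h : piO X (φ + ContinuousMap.const X c)
        = piO X φ + ContinuousMap.const _ c := by
      ext ν; exact ν.2.2.1 φ c
    show M.1 (piO X (φ + ContinuousMap.const X c)) = M.1 (piO X φ) + c
    rw [h]; exact M.2.2.1 _ c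
  · intro φ ψ h
    exact M.2.2.2 _ _ (fun ν => ν.2.2.2 φ ψ h)

/-! The Dirac functional at `ν` lies in the fiber over `ν`, so the fiber is nonempty. Since `O(X)`
is compact (a closed subset of `∏_φ [-‖φ‖, ‖φ‖]`), `|Λ Φ| ≤ ‖Φ‖` for every `Λ ∈ O(O(X))`, so the
pointwise supremum and infimum of the fiber are finite. The three defining properties of `O` pass
to pointwise suprema and infima of nonempty bounded families (adding a constant commutes with
them), and every member of the fiber takes the same value `ν φ` at `π_φ`, hence so do the
supremum and the infimum. -/

open Set

namespace OF

variable {Y : Type*} [TopologicalSpace Y]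

lemma apply_const {ν : C(Y, ℝ) → ℝ} (hν : ν ∈ OF Y) (c : ℝ) :
    ν (ContinuousMap.const Y c) = c := by
  have h := hν.2.1 1 (c - 1)
  rw [show (1 : C(Y, ℝ)) + .const Y (c - 1) = .const Y c by ext; simp, hν.1] at h
  linarith

lemma abs_apply_le_norm [CompactSpace Y] {ν : C(Y, ℝ) → ℝ} (hν : ν ∈ OF Y) (φ : C(Y, ℝ)) :
    |ν φ| ≤ ‖φ‖ := by
  have hφ (x : Y) : |φ x| ≤ ‖φ‖ := φ.norm_coe_le_norm x
  have upper := hν.2.2 φ (.const Y ‖φ‖) fun x => (abs_le.1 (hφ x)).2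
  have lower := hν.2.2 (.const Y (-‖φ‖)) φ fun x => (abs_le.1 (hφ x)).1
  rw [apply_const hν] at upper lower
  exact abs_le.2 ⟨lower, upper⟩

lemma isClosed : IsClosed (OF Y) := by
  simp only [OF, ofPred_and, ofPred_forall]
  refine (isClosed_eq (continuous_apply 1) continuous_const).inter (.inter ?_ ?_)
  · exact isClosed_iInter fun φ => isClosed_iInter fun c =>
      isClosed_eq (continuous_apply _) ((continuous_apply _).add continuous_const)
  · exact isClosed_iInter fun φ => isClosed_iInter fun ψ => isClosed_iInter fun _ =>
      isClosed_le (continuous_apply _) (continuous_apply _)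

instance [CompactSpace Y] : CompactSpace (OF Y) :=
  isCompact_iff_compactSpace.mp <|
    (isCompact_univ_pi fun φ : C(Y, ℝ) => isCompact_Icc (a := -‖φ‖) (b := ‖φ‖)).of_isClosed_subset
      isClosed fun _ hν φ _ => abs_le.1 (abs_apply_le_norm hν φ)

section Family

variable [CompactSpace Y] {ι : Type*} {ν : ι → C(Y, ℝ) → ℝ}

lemma bddAbove_range_apply (hν : ∀ i, ν i ∈ OF Y) (φ : C(Y, ℝ)) :
    BddAbove (range fun i => ν i φ) :=
  ⟨‖φ‖, by rintro _ ⟨i, rfl⟩; exact (abs_le.1 (abs_apply_le_norm (hν i) φ)).2⟩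

lemma bddBelow_range_apply (hν : ∀ i, ν i ∈ OF Y) (φ : C(Y, ℝ)) :
    BddBelow (range fun i => ν i φ) :=
  ⟨-‖φ‖, by rintro _ ⟨i, rfl⟩; exact (abs_le.1 (abs_apply_le_norm (hν i) φ)).1⟩

variable [Nonempty ι]

lemma iSup_mem (hν : ∀ i, ν i ∈ OF Y) : (fun φ => ⨆ i, ν i φ) ∈ OF Y := by
  refine ⟨?_, fun φ c => ?_, fun φ ψ h => ciSup_mono (bddAbove_range_apply hν ψ)
    fun i => (hν i).2.2 φ ψ h⟩
  · simp only [fun i => (hν i).1, ciSup_const]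
  · simp only [fun i => (hν i).2.1, ciSup_add (bddAbove_range_apply hν φ)]

lemma iInf_mem (hν : ∀ i, ν i ∈ OF Y) : (fun φ => ⨅ i, ν i φ) ∈ OF Y := by
  refine ⟨?_, fun φ c => ?_, fun φ ψ h => ciInf_mono (bddBelow_range_apply hν φ)
    fun i => (hν i).2.2 φ ψ h⟩
  · simp only [fun i => (hν i).1, ciInf_const]
  · simp only [fun i => (hν i).2.1, ciInf_add (bddBelow_range_apply hν φ)]

end Family

section Subset

variable [CompactSpace Y] {S : Set (OF Y)}

lemma sSup_image_apply_mem (hS : S.Nonempty) :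
    (fun φ => sSup ((fun ν : OF Y => ν.1 φ) '' S)) ∈ OF Y := by
  have := hS.to_subtype
  simp only [sSup_image']
  exact iSup_mem fun ν : S => ν.1.2

lemma sInf_image_apply_mem (hS : S.Nonempty) :
    (fun φ => sInf ((fun ν : OF Y => ν.1 φ) '' S)) ∈ OF Y := by
  have := hS.to_subtype
  simp only [sInf_image']
  exact iInf_mem fun ν : S => ν.1.2

lemma apply_le_sSup_image_apply {ν : OF Y} (hν : ν ∈ S) (φ : C(Y, ℝ)) :
    ν.1 φ ≤ sSup ((fun ν : OF Y => ν.1 φ) '' S) := by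
  refine le_csSup ?_ (mem_image_of_mem _ hν)
  rw [image_eq_range]
  exact bddAbove_range_apply (fun ν : S => ν.1.2) φ

lemma sInf_image_apply_le {ν : OF Y} (hν : ν ∈ S) (φ : C(Y, ℝ)) :
    sInf ((fun ν : OF Y => ν.1 φ) '' S) ≤ ν.1 φ := by
  refine csInf_le ?_ (mem_image_of_mem _ hν)
  rw [image_eq_range]
  exact bddBelow_range_apply (fun ν : S => ν.1.2) φ

end Subset

def dirac (y : Y) : OF Y :=
  ⟨fun φ => φ y, by simp, fun _ _ => by simp, fun _ _ h => h y⟩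

end OF

section Fiber

variable {X : Type*} [TopologicalSpace X]

lemma muO_eq_iff {Λ : OF (OF X)} {ν : OF X} : muO X Λ = ν ↔ ∀ φ, Λ.1 (piO X φ) = ν.1 φ :=
  Subtype.ext_iff.trans funext_iff

lemma muO_dirac (ν : OF X) : muO X (OF.dirac ν) = ν :=
  muO_eq_iff.2 fun _ => rfl

lemma image_apply_piO_muO_fiber (ν : OF X) (φ : C(X, ℝ)) :
    (fun Λ : OF (OF X) => Λ.1 (piO X φ)) '' (muO X ⁻¹' {ν}) = {ν.1 φ} := by
  have hconst : EqOn (fun Λ : OF (OF X) => Λ.1 (piO X φ)) (fun _ => ν.1 φ) (muO X ⁻¹' {ν}) :=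
    fun _ hΛ => muO_eq_iff.1 hΛ φ
  rw [hconst.image_eq]
  exact Nonempty.image_const ⟨OF.dirac ν, muO_dirac ν⟩ _

end Fiber

theorem muO_fiber_has_greatest_and_least_general (X : Type*) [TopologicalSpace X] [CompactSpace X]
    (ν : ↥(OF X)) :
    (muO X ⁻¹' {ν}).Nonempty ∧
    (∃ Λsup ∈ muO X ⁻¹' {ν},
      Λsup.1 = (fun Φ : C(↥(OF X), ℝ) =>
        sSup ((fun Λ : ↥(OF (↥(OF X))) => Λ.1 Φ) '' (muO X ⁻¹' {ν}))) ∧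
      ∀ Λ ∈ muO X ⁻¹' {ν}, ∀ Φ : C(↥(OF X), ℝ), Λ.1 Φ ≤ Λsup.1 Φ) ∧
    (∃ Λinf ∈ muO X ⁻¹' {ν},
      Λinf.1 = (fun Φ : C(↥(OF X), ℝ) =>
        sInf ((fun Λ : ↥(OF (↥(OF X))) => Λ.1 Φ) '' (muO X ⁻¹' {ν}))) ∧
      ∀ Λ ∈ muO X ⁻¹' {ν}, ∀ Φ : C(↥(OF X), ℝ), Λinf.1 Φ ≤ Λ.1 Φ) := by
  have hne : (muO X ⁻¹' {ν}).Nonempty := ⟨_, muO_dirac ν⟩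
  refine ⟨hne, ⟨⟨_, OF.sSup_image_apply_mem hne⟩, ?_, rfl,
      fun Λ hΛ => OF.apply_le_sSup_image_apply hΛ⟩,
    ⟨⟨_, OF.sInf_image_apply_mem hne⟩, ?_, rfl, fun Λ hΛ => OF.sInf_image_apply_le hΛ⟩⟩
  · exact muO_eq_iff.2 fun φ => by simp only [image_apply_piO_muO_fiber, csSup_singleton]
  · exact muO_eq_iff.2 fun φ => by simp only [image_apply_piO_muO_fiber, csInf_singleton]

/-- For any `ν ∈ O(X)`, the fiber `(μ_O X)⁻¹(ν)` is nonempty, and its pointwise supremum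
and pointwise infimum belong to the fiber; they are respectively the greatest and least
elements of the fiber in the pointwise order on functionals. -/
theorem muO_fiber_has_greatest_and_least (X : Type*) [TopologicalSpace X] [CompactSpace X]
    [T2Space X] (ν : ↥(OF X)) :
    (muO X ⁻¹' {ν}).Nonempty ∧
    (∃ Λsup ∈ muO X ⁻¹' {ν},
      Λsup.1 = (fun Φ : C(↥(OF X), ℝ) =>
        sSup ((fun Λ : ↥(OF (↥(OF X))) => Λ.1 Φ) '' (muO X ⁻¹' {ν}))) ∧
      ∀ Λ ∈ muO X ⁻¹' {ν}, ∀ Φ : C(↥(OF X), ℝ), Λ.1 Φ ≤ Λsup.1 Φ) ∧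
    (∃ Λinf ∈ muO X ⁻¹' {ν},
      Λinf.1 = (fun Φ : C(↥(OF X), ℝ) =>
        sInf ((fun Λ : ↥(OF (↥(OF X))) => Λ.1 Φ) '' (muO X ⁻¹' {ν}))) ∧
      ∀ Λ ∈ muO X ⁻¹' {ν}, ∀ Φ : C(↥(OF X), ℝ), Λinf.1 Φ ≤ Λ.1 Φ) :=
  muO_fiber_has_greatest_and_least_general X ν
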